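/- arXiv:math/0701846 — 2 statements merged into one kernel-verified Lean document; each statement's English description precedes it below -/
import Mathlib

section
/- The group G generated by α₁, α₂, α₃, β₁, β₂, β₃ subject to the relations α₂ = [β₁⁻¹, β₂⁻¹], β₂ = [β₁, α₂⁻¹], α₁ = [β₁⁻¹, β₃⁻¹], β₁ = [α₁⁻¹, β₃], α₃ = [β₂⁻¹, β₃⁻¹], β₃ = [β₂, α₃⁻¹], together with the commutation relations [α₁, β₁] = 1, [α₁, α₂] = 1, [α₁, β₂] = 1, [α₁, α₃] = 1, [β₁, α₃] = 1, [α₂, β₂] = 1, [α₂, α₃] = 1, [α₂, β₃] = 1, [α₃, β₃] = 1, is the trivial group. -/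
namespace Stmt0

open scoped commutatorElement

/-- The six generators of the free group on 6 letters. -/
def α₁ : FreeGroup (Fin 6) := FreeGroup.of 0
def α₂ : FreeGroup (Fin 6) := FreeGroup.of 1
def α₃ : FreeGroup (Fin 6) := FreeGroup.of 2
def β₁ : FreeGroup (Fin 6) := FreeGroup.of 3
def β₂ : FreeGroup (Fin 6) := FreeGroup.of 4
def β₃ : FreeGroup (Fin 6) := FreeGroup.of 5

/-- Relators of the Section 3 presentation. -/
def rels : Set (FreeGroup (Fin 6)) :=
  { α₂⁻¹ * ⁅β₁⁻¹, β₂⁻¹⁆,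
    β₂⁻¹ * ⁅β₁, α₂⁻¹⁆,
    α₁⁻¹ * ⁅β₁⁻¹, β₃⁻¹⁆,
    β₁⁻¹ * ⁅α₁⁻¹, β₃⁆,
    α₃⁻¹ * ⁅β₂⁻¹, β₃⁻¹⁆,
    β₃⁻¹ * ⁅β₂, α₃⁻¹⁆,
    ⁅α₁, β₁⁆, ⁅α₁, α₂⁆, ⁅α₁, β₂⁆, ⁅α₁, α₃⁆, ⁅β₁, α₃⁆,
    ⁅α₂, β₂⁆, ⁅α₂, α₃⁆, ⁅α₂, β₃⁆, ⁅α₃, β₃⁆ }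

/-!
The element β₂ = [β₁, α₂⁻¹] is a word in β₁ and α₂, which both commute with α₃; hence β₂
commutes with α₃ and β₃ = [β₂, α₃⁻¹] = 1. Once β₃ = 1, each remaining defining relation
α = [·, ·] or β = [·, ·] has a trivial commutator on its right-hand side, and the generators
die one after another: β₁ and α₃, then α₁ and α₂, then β₂.
-/

theorem _root_.Commute.commutatorElement_left {G : Type*} [Group G] {x y z : G}
    (hx : Commute x z) (hy : Commute y z) : Commute ⁅x, y⁆ z := by
  rw [commutatorElement_def]
  exact ((hx.mul_left hy).mul_left hx.inv_left).mul_left hy.inv_left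

theorem _root_.PresentedGroup.commute_mk_of_commutatorElement_mem {α : Type*}
    {rels : Set (FreeGroup α)} {x y : FreeGroup α} (h : ⁅x, y⁆ ∈ rels) :
    Commute (PresentedGroup.mk rels x) (PresentedGroup.mk rels y) :=
  commutatorElement_eq_one_iff_commute.mp <| by
    simpa using PresentedGroup.one_of_mem h

theorem _root_.PresentedGroup.eq_one_of_forall_of_eq_one {α : Type*}
    {rels : Set (FreeGroup α)} (h : ∀ a : α, (PresentedGroup.of a : PresentedGroup rels) = 1)
    (x : PresentedGroup rels) : x = 1 :=
  DFunLike.congr_fun (PresentedGroup.ext (φ := MonoidHom.id _) (ψ := 1) h) x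

theorem _root_.PresentedGroup.mk_eq_commutatorElement_of_mem {α : Type*}
    {rels : Set (FreeGroup α)} {x y z : FreeGroup α} (h : x⁻¹ * ⁅y, z⁆ ∈ rels) :
    PresentedGroup.mk rels x = ⁅PresentedGroup.mk rels y, PresentedGroup.mk rels z⁆ :=
  (PresentedGroup.mk_eq_mk_of_inv_mul_mem h).trans (map_commutatorElement _ _ _)

theorem eq_one_of_relations {G : Type*} [Group G] {a₁ a₂ a₃ b₁ b₂ b₃ : G}
    (ha₂ : a₂ = ⁅b₁⁻¹, b₂⁻¹⁆) (hb₂ : b₂ = ⁅b₁, a₂⁻¹⁆) (ha₁ : a₁ = ⁅b₁⁻¹, b₃⁻¹⁆)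
    (hb₁ : b₁ = ⁅a₁⁻¹, b₃⁆) (ha₃ : a₃ = ⁅b₂⁻¹, b₃⁻¹⁆) (hb₃ : b₃ = ⁅b₂, a₃⁻¹⁆)
    (hb₁a₃ : Commute b₁ a₃) (ha₂a₃ : Commute a₂ a₃) :
    a₁ = 1 ∧ a₂ = 1 ∧ a₃ = 1 ∧ b₁ = 1 ∧ b₂ = 1 ∧ b₃ = 1 := by
  have hb₂a₃ : Commute b₂ a₃ := hb₂ ▸ hb₁a₃.commutatorElement_left ha₂a₃.inv_left
  have hb₃_one : b₃ = 1 := hb₃.trans hb₂a₃.inv_right.commutator_eq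
  have hb₁_one : b₁ = 1 := by rw [hb₁, hb₃_one, commutatorElement_one_right]
  have ha₃_one : a₃ = 1 := by rw [ha₃, hb₃_one, inv_one, commutatorElement_one_right]
  have ha₁_one : a₁ = 1 := by rw [ha₁, hb₁_one, inv_one, commutatorElement_one_left]
  have ha₂_one : a₂ = 1 := by rw [ha₂, hb₁_one, inv_one, commutatorElement_one_left]
  have hb₂_one : b₂ = 1 := by rw [hb₂, hb₁_one, commutatorElement_one_left]
  exact ⟨ha₁_one, ha₂_one, ha₃_one, hb₁_one, hb₂_one, hb₃_one⟩

theorem presented_group_trivial : ∀ x : PresentedGroup rels, x = 1 := by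
  open PresentedGroup in
  obtain ⟨h₁, h₂, h₃, h₄, h₅, h₆⟩ := eq_one_of_relations
    (by simpa using mk_eq_commutatorElement_of_mem (show α₂⁻¹ * ⁅β₁⁻¹, β₂⁻¹⁆ ∈ rels by simp [rels]))
    (by simpa using mk_eq_commutatorElement_of_mem (show β₂⁻¹ * ⁅β₁, α₂⁻¹⁆ ∈ rels by simp [rels]))
    (by simpa using mk_eq_commutatorElement_of_mem (show α₁⁻¹ * ⁅β₁⁻¹, β₃⁻¹⁆ ∈ rels by simp [rels]))
    (by simpa using mk_eq_commutatorElement_of_mem (show β₁⁻¹ * ⁅α₁⁻¹, β₃⁆ ∈ rels by simp [rels]))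
    (by simpa using mk_eq_commutatorElement_of_mem (show α₃⁻¹ * ⁅β₂⁻¹, β₃⁻¹⁆ ∈ rels by simp [rels]))
    (by simpa using mk_eq_commutatorElement_of_mem (show β₃⁻¹ * ⁅β₂, α₃⁻¹⁆ ∈ rels by simp [rels]))
    (commute_mk_of_commutatorElement_mem (show ⁅β₁, α₃⁆ ∈ rels by simp [rels]))
    (commute_mk_of_commutatorElement_mem (show ⁅α₂, α₃⁆ ∈ rels by simp [rels]))
  refine eq_one_of_forall_of_eq_one fun i => ?_
  fin_cases i
  exacts [h₁, h₂, h₃, h₄, h₅, h₆]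

end Stmt0
end

section
/- The group G generated by a₁, b₁, a₂, b₂, c₁, d₁, c₂, d₂ subject to the relations [b₁⁻¹, d₁⁻¹] = a₁, [a₁⁻¹, d₁] = b₁, [b₂⁻¹, d₂⁻¹] = a₂, [a₂⁻¹, d₂] = b₂, [d₁⁻¹, b₂⁻¹] = c₁, [c₁⁻¹, b₂] = d₁, [d₂⁻¹, b₁⁻¹] = c₂, [c₂⁻¹, b₁] = d₂, the commutation relations [a₁, c₁] = 1, [a₁, c₂] = 1, [a₁, d₂] = 1, [b₁, c₁] = 1, [a₂, c₁] = 1, [a₂, c₂] = 1, [a₂, d₁] = 1, [b₂, c₂] = 1, and the surface relations [a₁, b₁][a₂, b₂] = 1, [c₁, d₁][c₂, d₂] = 1, is a perfect group, i.e., its abelianization is trivial. -/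
namespace Stmt3

open scoped commutatorElement

def a₁ : FreeGroup (Fin 8) := FreeGroup.of 0
def b₁ : FreeGroup (Fin 8) := FreeGroup.of 1
def a₂ : FreeGroup (Fin 8) := FreeGroup.of 2
def b₂ : FreeGroup (Fin 8) := FreeGroup.of 3
def c₁ : FreeGroup (Fin 8) := FreeGroup.of 4
def d₁ : FreeGroup (Fin 8) := FreeGroup.of 5
def c₂ : FreeGroup (Fin 8) := FreeGroup.of 6
def d₂ : FreeGroup (Fin 8) := FreeGroup.of 7

/-- Relators of the Section 4 presentation. -/
def rels : Set (FreeGroup (Fin 8)) :=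
  { ⁅b₁⁻¹, d₁⁻¹⁆ * a₁⁻¹,
    ⁅a₁⁻¹, d₁⁆ * b₁⁻¹,
    ⁅b₂⁻¹, d₂⁻¹⁆ * a₂⁻¹,
    ⁅a₂⁻¹, d₂⁆ * b₂⁻¹,
    ⁅d₁⁻¹, b₂⁻¹⁆ * c₁⁻¹,
    ⁅c₁⁻¹, b₂⁆ * d₁⁻¹,
    ⁅d₂⁻¹, b₁⁻¹⁆ * c₂⁻¹,
    ⁅c₂⁻¹, b₁⁆ * d₂⁻¹,
    ⁅a₁, c₁⁆, ⁅a₁, c₂⁆, ⁅a₁, d₂⁆, ⁅b₁, c₁⁆,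
    ⁅a₂, c₁⁆, ⁅a₂, c₂⁆, ⁅a₂, d₁⁆, ⁅b₂, c₂⁆,
    ⁅a₁, b₁⁆ * ⁅a₂, b₂⁆, ⁅c₁, d₁⁆ * ⁅c₂, d₂⁆ }

theorem _root_.Abelianization.of_commutatorElement {G : Type*} [Group G] (g h : G) :
    Abelianization.of ⁅g, h⁆ = 1 := by
  rw [map_commutatorElement]
  exact (Commute.all _ _).commutator_eq

theorem _root_.PresentedGroup.abelianization_of_of_eq_one_of_commutatorElement_mul_inv_mem
    {α : Type*} {rels : Set (FreeGroup α)} {x y : FreeGroup α} {i : α}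
    (h : ⁅x, y⁆ * (FreeGroup.of i)⁻¹ ∈ rels) :
    Abelianization.of (PresentedGroup.of (rels := rels) i) = 1 := by
  rw [PresentedGroup.of, ← PresentedGroup.mk_eq_mk_of_mul_inv_mem h, map_commutatorElement]
  exact Abelianization.of_commutatorElement _ _

theorem _root_.PresentedGroup.abelianization_eq_one_of_forall_of_of_eq_one
    {α : Type*} {rels : Set (FreeGroup α)}
    (h : ∀ i, Abelianization.of (PresentedGroup.of (rels := rels) i) = 1)
    (x : Abelianization (PresentedGroup rels)) : x = 1 := by
  have hof : (Abelianization.of : PresentedGroup rels →* _) = 1 := PresentedGroup.ext h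
  obtain ⟨g, rfl⟩ := QuotientGroup.mk_surjective x
  exact DFunLike.congr_fun hof g

/-- The presented group is perfect: its abelianization is trivial. -/
theorem presented_group_perfect :
    ∀ x : Abelianization (PresentedGroup rels), x = 1 := by
  refine PresentedGroup.abelianization_eq_one_of_forall_of_of_eq_one fun i => ?_
  -- The first eight relators write each generator as a commutator.
  fin_cases i <;>
    exact PresentedGroup.abelianization_of_of_eq_one_of_commutatorElement_mul_inv_mem
      (by simp only [rels]; tauto)

end Stmt3
end
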